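/- Let n, m, s be positive integers, let L : ℝⁿ × ℝᵐ → ℝ and P = (P₁,…,P_s) : ℝⁿ × ℝᵐ → ℝˢ be such that the gradients ∇_v L and ∇_v P_k (k = 1,…,s) exist and are differentiable, let Q : ℝⁿ × ℝᵐ → ℝ be differentiable, let λ ∈ ℝˢ be a fixed vector, and let v : ℝᵐ → ℝⁿ be differentiable. Assume the stationarity condition ∇_v L(v(θ), θ) + (D_v P(v(θ), θ))ᵀ λ = 0 holds for every θ ∈ ℝᵐ. Fix θ₀ ∈ ℝᵐ and set H = ∇²_{vv} L(v(θ₀), θ₀) + Σ_{k=1}^{s} λ_k ∇²_{vv} P_k(v(θ₀), θ₀) ∈ ℝ^{n×n} and C = ∂_θ ∇_v L(v(θ₀), θ₀) + Σ_{k=1}^{s} λ_k ∂_θ ∇_v P_k(v(θ₀), θ₀) ∈ ℝ^{n×m}. Suppose that p ∈ ℝⁿ solves the adjoint equation Hᵀ p = −∇_v Q(v(θ₀), θ₀). Then the outer objective J(θ) = Q(v(θ), θ) satisfies ∇J(θ₀) = Cᵀ p + ∇_θ Q(v(θ₀), θ₀). -/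

import Mathlib

open scoped BigOperators

/-- The continuous linear functional `u ↦ ∑ i, g i * u i` on `ℝⁿ`, i.e. the linear map
associated with the gradient vector `g`. -/
noncomputable def gradCLM {n : ℕ} (g : Fin n → ℝ) : (Fin n → ℝ) →L[ℝ] ℝ :=
  ∑ i, g i • (ContinuousLinearMap.proj i : (Fin n → ℝ) →L[ℝ] ℝ)

lemma clm_expand {n m : ℕ} {F : Type*} [NormedAddCommGroup F] [NormedSpace ℝ F]
    (f : ((Fin n → ℝ) × (Fin m → ℝ)) →L[ℝ] F) (w : Fin n → ℝ) (u : Fin m → ℝ) :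
    f (w, u) = (∑ j, w j • f (Pi.single j 1, 0)) + f (0, u) := by
  have hw : ((w, (0:Fin m → ℝ)) : (Fin n → ℝ) × (Fin m → ℝ))
      = ∑ j, w j • ((Pi.single j 1 : Fin n → ℝ), (0:Fin m → ℝ)) := by
    refine Prod.ext ?_ ?_
    · simp only [Prod.fst_sum, Prod.smul_mk]
      ext i
      simp [Finset.sum_apply, Pi.single_apply, mul_comm]
    · simp only [Prod.snd_sum, Prod.smul_mk, smul_zero]
      simp
  have h1 : f (w, u) = f (w, 0) + f (0, u) := by
    rw [← map_add]; norm_num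
  rw [h1, hw, map_sum]
  simp_rw [map_smul]

/-- The adjoint-method gradient formula for bilevel optimization: under the stationarity
condition of the inner problem, if `p` solves the adjoint equation `Hᵀ p = −∇_v Q(v(θ₀),θ₀)`,
then the outer objective `J(θ) = Q(v(θ),θ)` satisfies `∇J(θ₀) = Cᵀ p + ∇_θ Q(v(θ₀),θ₀)`. -/
theorem adjoint_method_gradient
    (n m s : ℕ) (hn : 0 < n) (hm : 0 < m) (hs : 0 < s)
    (L : (Fin n → ℝ) × (Fin m → ℝ) → ℝ)
    (P : Fin s → (Fin n → ℝ) × (Fin m → ℝ) → ℝ)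
    (Q : (Fin n → ℝ) × (Fin m → ℝ) → ℝ)
    (gradL : (Fin n → ℝ) × (Fin m → ℝ) → Fin n → ℝ)
    (gradP : Fin s → (Fin n → ℝ) × (Fin m → ℝ) → Fin n → ℝ)
    (lam : Fin s → ℝ)
    (v : (Fin m → ℝ) → Fin n → ℝ)
    -- `gradL p` is the gradient of `L` in its first (v) variable at `p`
    (hgradL : ∀ p : (Fin n → ℝ) × (Fin m → ℝ),
      HasFDerivAt (fun u => L (u, p.2)) (gradCLM (gradL p)) p.1)
    -- `gradP k p` is the gradient of `P k` in its first (v) variable at `p`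
    (hgradP : ∀ (k : Fin s) (p : (Fin n → ℝ) × (Fin m → ℝ)),
      HasFDerivAt (fun u => P k (u, p.2)) (gradCLM (gradP k p)) p.1)
    -- the gradients are differentiable, and `Q`, `v` are differentiable
    (hgradLdiff : Differentiable ℝ gradL)
    (hgradPdiff : ∀ k, Differentiable ℝ (gradP k))
    (hQ : Differentiable ℝ Q)
    (hv : Differentiable ℝ v)
    -- stationarity condition, holding identically in θ
    (hstat : ∀ θ : Fin m → ℝ, gradL (v θ, θ) + ∑ k, lam k • gradP k (v θ, θ) = 0)
    (θ₀ : Fin m → ℝ)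
    -- H = ∇²_{vv} L(v(θ₀),θ₀) + Σ_k λ_k ∇²_{vv} P_k(v(θ₀),θ₀)
    (H : Matrix (Fin n) (Fin n) ℝ)
    (hH : H = (Matrix.of fun i j : Fin n =>
          fderiv ℝ gradL (v θ₀, θ₀) ((Pi.single j 1 : Fin n → ℝ), (0 : Fin m → ℝ)) i)
        + ∑ k, lam k • Matrix.of fun i j : Fin n =>
          fderiv ℝ (gradP k) (v θ₀, θ₀) ((Pi.single j 1 : Fin n → ℝ), (0 : Fin m → ℝ)) i)
    -- C = ∂_θ∇_v L(v(θ₀),θ₀) + Σ_k λ_k ∂_θ∇_v P_k(v(θ₀),θ₀)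
    (C : Matrix (Fin n) (Fin m) ℝ)
    (hC : C = (Matrix.of fun (i : Fin n) (α : Fin m) =>
          fderiv ℝ gradL (v θ₀, θ₀) ((0 : Fin n → ℝ), (Pi.single α 1 : Fin m → ℝ)) i)
        + ∑ k, lam k • Matrix.of fun (i : Fin n) (α : Fin m) =>
          fderiv ℝ (gradP k) (v θ₀, θ₀) ((0 : Fin n → ℝ), (Pi.single α 1 : Fin m → ℝ)) i)
    -- p solves the adjoint equation Hᵀ p = −∇_v Q(v(θ₀),θ₀)
    (p : Fin n → ℝ)
    (hp : ∀ j : Fin n, ∑ i, H i j * p i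
      = - fderiv ℝ Q (v θ₀, θ₀) ((Pi.single j 1 : Fin n → ℝ), (0 : Fin m → ℝ))) :
    -- conclusion : ∇J(θ₀) = Cᵀ p + ∇_θ Q(v(θ₀),θ₀), componentwise
    ∀ α : Fin m,
      fderiv ℝ (fun θ => Q (v θ, θ)) θ₀ (Pi.single α 1)
        = (∑ i, C i α * p i)
          + fderiv ℝ Q (v θ₀, θ₀) ((0 : Fin n → ℝ), (Pi.single α 1 : Fin m → ℝ)) := by
  intro α
  set pt : (Fin n → ℝ) × (Fin m → ℝ) := (v θ₀, θ₀) with hpt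
  set Dv := fderiv ℝ v θ₀ with hDvdef
  set Dφ : (Fin m → ℝ) →L[ℝ] ((Fin n → ℝ) × (Fin m → ℝ)) :=
    Dv.prod (ContinuousLinearMap.id ℝ (Fin m → ℝ)) with hDφdef
  have hφ : HasFDerivAt (fun θ => ((v θ, θ) : (Fin n → ℝ) × (Fin m → ℝ))) Dφ θ₀ :=
    HasFDerivAt.prodMk ((hv θ₀).hasFDerivAt) (hasFDerivAt_id θ₀)
  set w : Fin n → ℝ := Dv (Pi.single α 1) with hwdef
  have hDφα : Dφ (Pi.single α 1) = (w, Pi.single α 1) := rfl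
  -- chain rule for J
  have hJ : HasFDerivAt (fun θ => Q (v θ, θ)) ((fderiv ℝ Q pt).comp Dφ) θ₀ := by
    have := HasFDerivAt.comp (g := Q) (f := fun θ => ((v θ, θ) : (Fin n → ℝ) × (Fin m → ℝ)))
      θ₀ ((hQ pt).hasFDerivAt) hφ
    exact this
  have hJval : fderiv ℝ (fun θ => Q (v θ, θ)) θ₀ (Pi.single α 1)
      = fderiv ℝ Q pt (w, Pi.single α 1) := by
    rw [hJ.fderiv]; rfl
  -- derivative of the stationarity identity
  set DL := fderiv ℝ gradL pt with hDLdef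
  set DP := fun k => fderiv ℝ (gradP k) pt with hDPdef
  have hGL : HasFDerivAt (fun θ => gradL (v θ, θ)) (DL.comp Dφ) θ₀ := by
    have := HasFDerivAt.comp (g := gradL) (f := fun θ => ((v θ, θ) : (Fin n → ℝ) × (Fin m → ℝ)))
      θ₀ ((hgradLdiff pt).hasFDerivAt) hφ
    exact this
  have hGP : ∀ k, HasFDerivAt (fun θ => gradP k (v θ, θ)) ((DP k).comp Dφ) θ₀ := by
    intro k
    have := HasFDerivAt.comp (g := gradP k) (f := fun θ => ((v θ, θ) : (Fin n → ℝ) × (Fin m → ℝ)))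
      θ₀ ((hgradPdiff k pt).hasFDerivAt) hφ
    exact this
  have hG : HasFDerivAt (fun θ => gradL (v θ, θ) + ∑ k, lam k • gradP k (v θ, θ))
      (DL.comp Dφ + ∑ k, lam k • (DP k).comp Dφ) θ₀ :=
    hGL.add (HasFDerivAt.fun_sum fun k _ => (hGP k).const_smul (lam k))
  have heq : (fun θ => gradL (v θ, θ) + ∑ k, lam k • gradP k (v θ, θ))
      = fun _ => (0 : Fin n → ℝ) := funext hstat
  have hG0 : (DL.comp Dφ + ∑ k, lam k • (DP k).comp Dφ) = 0 :=
    (heq ▸ hG).unique (hasFDerivAt_const _ _)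
  -- componentwise zero identity at direction e_α
  have h0 : DL (w, Pi.single α 1) + ∑ k, lam k • DP k (w, Pi.single α 1) = 0 := by
    have := congrArg (fun T : (Fin m → ℝ) →L[ℝ] (Fin n → ℝ) => T (Pi.single α 1)) hG0
    simpa [ContinuousLinearMap.add_apply, ContinuousLinearMap.sum_apply,
      ContinuousLinearMap.smul_apply, ContinuousLinearMap.comp_apply, hDφα] using this
  -- key: ∑_j H i j * w j = - C i α
  have key : ∀ i, ∑ j, H i j * w j = - C i α := by
    intro i
    have h0i := congrFun h0 i
    rw [clm_expand DL w (Pi.single α 1)] at h0i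
    simp only [Pi.add_apply, Finset.sum_apply, Pi.smul_apply, smul_eq_mul] at h0i
    have h0i' : (∑ j, w j * DL (Pi.single j 1, 0) i + DL (0, Pi.single α 1) i)
        + ∑ k, lam k * ((∑ j, w j * DP k (Pi.single j 1, 0) i) + DP k (0, Pi.single α 1) i)
        = 0 := by
      simp only [Pi.zero_apply] at h0i
      rw [show (∑ k, lam k * DP k (w, Pi.single α 1) i)
          = ∑ k, lam k * ((∑ j, w j * DP k (Pi.single j 1, 0) i) + DP k (0, Pi.single α 1) i)
        from Finset.sum_congr rfl fun k _ => by
          congr 1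
          rw [clm_expand (DP k) w (Pi.single α 1)]
          simp [Finset.sum_apply]] at h0i
      exact h0i
    have hHij : ∀ j, H i j = DL (Pi.single j 1, 0) i + ∑ k, lam k * DP k (Pi.single j 1, 0) i := by
      intro j
      simp [hH, Matrix.add_apply, Matrix.sum_apply, Matrix.smul_apply, Matrix.of_apply,
        hDLdef, hDPdef, hpt, smul_eq_mul]
    have hCi : C i α = DL (0, Pi.single α 1) i + ∑ k, lam k * DP k (0, Pi.single α 1) i := by
      simp [hC, Matrix.add_apply, Matrix.sum_apply, Matrix.smul_apply, Matrix.of_apply,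
        hDLdef, hDPdef, hpt, smul_eq_mul]
    have swap : ∑ j, (∑ k, lam k * DP k (Pi.single j 1, 0) i) * w j
        = ∑ k, lam k * ∑ j, w j * DP k (Pi.single j 1, 0) i := by
      simp_rw [Finset.sum_mul]
      rw [Finset.sum_comm]
      refine Finset.sum_congr rfl fun k _ => ?_
      rw [Finset.mul_sum]
      refine Finset.sum_congr rfl fun j _ => by ring
    calc ∑ j, H i j * w j
        = ∑ j, (DL (Pi.single j 1, 0) i + ∑ k, lam k * DP k (Pi.single j 1, 0) i) * w j := by
          refine Finset.sum_congr rfl fun j _ => by rw [hHij j]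
      _ = ∑ j, DL (Pi.single j 1, 0) i * w j
            + ∑ j, (∑ k, lam k * DP k (Pi.single j 1, 0) i) * w j := by
          rw [← Finset.sum_add_distrib]
          exact Finset.sum_congr rfl fun j _ => by ring
      _ = - C i α := by
          rw [swap, hCi]
          have : ∑ j, DL (Pi.single j 1, 0) i * w j = ∑ j, w j * DL (Pi.single j 1, 0) i :=
            Finset.sum_congr rfl fun j _ => by ring
          rw [this]
          have expand : ∑ k, lam k * ((∑ j, w j * DP k (Pi.single j 1, 0) i)
                + DP k (0, Pi.single α 1) i)
              = (∑ k, lam k * ∑ j, w j * DP k (Pi.single j 1, 0) i)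
                + ∑ k, lam k * DP k (0, Pi.single α 1) i := by
            rw [← Finset.sum_add_distrib]
            exact Finset.sum_congr rfl fun k _ => by ring
          rw [expand] at h0i'
          linarith
  -- final computation
  have hQexp : fderiv ℝ Q pt (w, Pi.single α 1)
      = (∑ j, w j * fderiv ℝ Q pt (Pi.single j 1, 0)) + fderiv ℝ Q pt (0, Pi.single α 1) := by
    rw [clm_expand (fderiv ℝ Q pt) w (Pi.single α 1)]
    simp [smul_eq_mul]
  have hp' : ∀ j, fderiv ℝ Q pt (Pi.single j 1, 0) = - ∑ i, H i j * p i := by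
    intro j; have := hp j; rw [hpt]; linarith
  have main : ∑ j, w j * fderiv ℝ Q pt (Pi.single j 1, 0) = ∑ i, C i α * p i := by
    calc ∑ j, w j * fderiv ℝ Q pt (Pi.single j 1, 0)
        = ∑ j, ∑ i, -(w j * (H i j * p i)) := by
          refine Finset.sum_congr rfl fun j _ => ?_
          rw [hp' j, mul_neg, Finset.mul_sum, ← Finset.sum_neg_distrib]
      _ = ∑ i, ∑ j, -(w j * (H i j * p i)) := Finset.sum_comm
      _ = ∑ i, (- ∑ j, H i j * w j) * p i := by
          refine Finset.sum_congr rfl fun i _ => ?_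
          rw [neg_mul, Finset.sum_mul, ← Finset.sum_neg_distrib]
          exact Finset.sum_congr rfl fun j _ => by ring
      _ = ∑ i, C i α * p i := by
          refine Finset.sum_congr rfl fun i _ => ?_
          rw [key i, neg_neg]
  rw [hJval, hQexp, main, hpt]
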